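/- arXiv:2505.12927 — 6 statements merged into one kernel-verified Lean document; each statement's English description precedes it below -/
import Mathlib

section
/- For every real number x, the limit as q tends to 1 from below of the infinite product ∏_{j=0}^∞ (1 − x(1−q)q^j) exists and equals e^{−x}. -/
open Real Filter

lemma log_add_abs_le {t : ℝ} (ht : |t| ≤ 1/2) : |Real.log (1 - t) + t| ≤ 2 * t ^ 2 := by
  have h1 : |t| < 1 := by linarith
  have h := Real.abs_log_sub_add_sum_range_le h1 1
  simp [Finset.sum_range_one] at h
  have h2 : |t| ^ 2 / (1 - |t|) ≤ 2 * t ^ 2 := by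
    rw [div_le_iff₀ (by linarith)]
    nlinarith [sq_abs t, sq_nonneg t, abs_nonneg t]
  calc |Real.log (1 - t) + t| = |t + Real.log (1 - t)| := by rw [add_comm]
    _ ≤ |t| ^ 2 / (1 - |t|) := by simpa using h
    _ ≤ 2 * t ^ 2 := h2

lemma term_abs_le {x q : ℝ} (hq0 : 0 < q) (hq1 : q < 1) (hx : |x| * (1 - q) ≤ 1/2)
    (j : ℕ) : |x * (1 - q) * q ^ j| ≤ 1/2 := by
  have hqj0 : (0:ℝ) ≤ q ^ j := pow_nonneg hq0.le j
  have hqj1 : q ^ j ≤ 1 := pow_le_one₀ hq0.le hq1.le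
  have he : |x * (1 - q) * q ^ j| = |x| * (1 - q) * q ^ j := by
    rw [abs_mul, abs_mul, abs_of_nonneg (by linarith : (0:ℝ) ≤ 1 - q), abs_of_nonneg hqj0]
  rw [he]
  calc |x| * (1 - q) * q ^ j ≤ |x| * (1 - q) * 1 :=
        mul_le_mul_of_nonneg_left hqj1 (mul_nonneg (abs_nonneg x) (by linarith))
    _ ≤ 1/2 := by linarith

lemma summable_g {x q : ℝ} (hq0 : 0 < q) (hq1 : q < 1) :
    Summable (fun j : ℕ => x * (1 - q) * q ^ j) :=
  (summable_geometric_of_lt_one hq0.le hq1).mul_left _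

lemma summable_log {x q : ℝ} (hq0 : 0 < q) (hq1 : q < 1) (hx : |x| * (1 - q) ≤ 1/2) :
    Summable (fun j : ℕ => Real.log (1 - x * (1 - q) * q ^ j)) := by
  apply Summable.of_abs
  apply Summable.of_nonneg_of_le (fun j => abs_nonneg _) (fun j => ?_)
    ((summable_g hq0 hq1 (x := x)).abs.mul_left 2)
  set t := x * (1 - q) * q ^ j with ht
  have h1 := term_abs_le hq0 hq1 hx j
  have h2 := log_add_abs_le h1
  rw [← ht] at h1 h2
  have h3 : 2 * t ^ 2 ≤ |t| := by nlinarith [sq_abs t, abs_nonneg t]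
  calc |Real.log (1 - t)| = |Real.log (1 - t) + t - t| := by ring_nf
    _ ≤ |Real.log (1 - t) + t| + |t| := abs_sub _ _
    _ ≤ 2 * t ^ 2 + |t| := by linarith
    _ ≤ 2 * |t| := by linarith


lemma abs_tsum_le' (f : ℕ → ℝ) (h : Summable fun j => |f j|) : |∑' j, f j| ≤ ∑' j, |f j| := by
  simpa [Real.norm_eq_abs] using
    norm_tsum_le_tsum_norm (f := f) (by simpa [Real.norm_eq_abs] using h)

lemma tprod_eq_exp {x q : ℝ} (hq0 : 0 < q) (hq1 : q < 1) (hx : |x| * (1 - q) ≤ 1/2) :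
    (∏' j : ℕ, (1 - x * (1 - q) * q ^ j))
      = Real.exp (∑' j : ℕ, Real.log (1 - x * (1 - q) * q ^ j)) := by
  have hpos : ∀ j : ℕ, 0 < 1 - x * (1 - q) * q ^ j := by
    intro j
    have := term_abs_le hq0 hq1 hx j
    have := abs_le.mp this
    linarith [this.2]
  have hs := (summable_log hq0 hq1 hx).hasSum
  have hp : HasProd (fun j : ℕ => 1 - x * (1 - q) * q ^ j)
      (Real.exp (∑' j : ℕ, Real.log (1 - x * (1 - q) * q ^ j))) := by
    have he : (Real.exp ∘ fun j : ℕ => Real.log (1 - x * (1 - q) * q ^ j))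
        = fun j : ℕ => 1 - x * (1 - q) * q ^ j :=
      funext fun j => Real.exp_log (hpos j)
    simpa [he] using hs.rexp
  exact hp.tprod_eq

lemma tsum_log_bound {x q : ℝ} (hq0 : 0 < q) (hq1 : q < 1) (hx : |x| * (1 - q) ≤ 1/2) :
    |(∑' j : ℕ, Real.log (1 - x * (1 - q) * q ^ j)) + x| ≤ 2 * x ^ 2 * (1 - q) := by
  have hq' : (0:ℝ) < 1 - q := by linarith
  have hsg : Summable (fun j : ℕ => x * (1 - q) * q ^ j) := summable_g hq0 hq1
  have hsl := summable_log hq0 hq1 hx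
  have hsum_t : ∑' j : ℕ, x * (1 - q) * q ^ j = x := by
    rw [tsum_mul_left, tsum_geometric_of_lt_one hq0.le hq1]
    field_simp
  have hsplit : (∑' j : ℕ, Real.log (1 - x * (1 - q) * q ^ j)) + x
      = ∑' j : ℕ, (Real.log (1 - x * (1 - q) * q ^ j) + x * (1 - q) * q ^ j) := by
    rw [Summable.tsum_add hsl hsg, hsum_t]
  have hterm : ∀ j : ℕ, |Real.log (1 - x * (1 - q) * q ^ j) + x * (1 - q) * q ^ j|
      ≤ 2 * x ^ 2 * (1 - q) ^ 2 * q ^ j := by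
    intro j
    have h1 := log_add_abs_le (term_abs_le hq0 hq1 hx j)
    have h2 : (x * (1 - q) * q ^ j) ^ 2 = x ^ 2 * (1 - q) ^ 2 * (q ^ j) ^ 2 := by ring
    have h3 : (q ^ j) ^ 2 ≤ q ^ j := by
      have := pow_le_one₀ hq0.le hq1.le (n := j)
      nlinarith [pow_nonneg hq0.le j]
    calc |Real.log (1 - x * (1 - q) * q ^ j) + x * (1 - q) * q ^ j|
        ≤ 2 * (x * (1 - q) * q ^ j) ^ 2 := h1
      _ = 2 * x ^ 2 * (1 - q) ^ 2 * (q ^ j) ^ 2 := by ring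
      _ ≤ 2 * x ^ 2 * (1 - q) ^ 2 * q ^ j := mul_le_mul_of_nonneg_left h3 (by positivity)
  have hsb : Summable (fun j : ℕ => 2 * x ^ 2 * (1 - q) ^ 2 * q ^ j) :=
    (summable_geometric_of_lt_one hq0.le hq1).mul_left _
  have habs : Summable (fun j : ℕ => |Real.log (1 - x * (1 - q) * q ^ j) + x * (1 - q) * q ^ j|) :=
    Summable.of_nonneg_of_le (fun j => abs_nonneg _) hterm hsb
  rw [hsplit]
  calc |∑' j : ℕ, (Real.log (1 - x * (1 - q) * q ^ j) + x * (1 - q) * q ^ j)|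
      ≤ ∑' j : ℕ, |Real.log (1 - x * (1 - q) * q ^ j) + x * (1 - q) * q ^ j| :=
        abs_tsum_le' _ habs
    _ ≤ ∑' j : ℕ, 2 * x ^ 2 * (1 - q) ^ 2 * q ^ j := Summable.tsum_le_tsum hterm habs hsb
    _ = 2 * x ^ 2 * (1 - q) ^ 2 * (1 - q)⁻¹ := by
        rw [tsum_mul_left, tsum_geometric_of_lt_one hq0.le hq1]
    _ = 2 * x ^ 2 * (1 - q) := by field_simp

/-- For every real number `x`, the limit as `q → 1⁻` of the infinite product
`∏_{j=0}^∞ (1 − x(1−q)q^j)` exists and equals `e^{−x}`. -/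
theorem qExp_tendsto_exp (x : ℝ) :
    Filter.Tendsto (fun q : ℝ => ∏' j : ℕ, (1 - x * (1 - q) * q ^ j))
      (nhdsWithin 1 (Set.Iio 1)) (nhds (Real.exp (-x))) := by
  set δ : ℝ := 1 / (2 * (|x| + 1)) with hδdef
  have hδ : 0 < δ := by positivity
  set q₀ : ℝ := max (1 - δ) 0 with hq₀def
  have hq₀lt : q₀ < 1 := max_lt (by linarith) one_pos
  have hmem : Set.Ioo q₀ 1 ∈ nhdsWithin 1 (Set.Iio 1) := by
    rw [show Set.Ioo q₀ 1 = Set.Ioi q₀ ∩ Set.Iio 1 from rfl]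
    exact Filter.inter_mem (mem_nhdsWithin_of_mem_nhds (Ioi_mem_nhds hq₀lt))
      self_mem_nhdsWithin
  have hcond : ∀ q ∈ Set.Ioo q₀ 1, 0 < q ∧ q < 1 ∧ |x| * (1 - q) ≤ 1/2 := by
    intro q hq
    obtain ⟨hq1, hq2⟩ := hq
    have hq0 : 0 < q := lt_of_le_of_lt (le_max_right _ _) hq1
    have hqδ : 1 - q < δ := by
      have := lt_of_le_of_lt (le_max_left (1 - δ) 0) hq1
      linarith
    refine ⟨hq0, hq2, ?_⟩
    have h1 : |x| * (1 - q) ≤ (|x| + 1) * δ := by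
      apply mul_le_mul (by linarith) hqδ.le (by linarith) (by positivity)
    have h2 : (|x| + 1) * δ = 1/2 := by
      rw [hδdef]; field_simp
    linarith
  -- tendsto of the sum of logs
  have hS : Filter.Tendsto (fun q : ℝ => ∑' j : ℕ, Real.log (1 - x * (1 - q) * q ^ j))
      (nhdsWithin 1 (Set.Iio 1)) (nhds (-x)) := by
    rw [tendsto_iff_dist_tendsto_zero]
    refine squeeze_zero' (g := fun q : ℝ => 2 * x ^ 2 * (1 - q))
      (Filter.eventually_of_mem hmem fun q _ => dist_nonneg)
      (Filter.eventually_of_mem hmem ?_) ?_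
    · intro q hq
      obtain ⟨h0, h1, h2⟩ := hcond q hq
      have := tsum_log_bound h0 h1 h2
      rw [Real.dist_eq]
      calc |(∑' j : ℕ, Real.log (1 - x * (1 - q) * q ^ j)) - (-x)|
          = |(∑' j : ℕ, Real.log (1 - x * (1 - q) * q ^ j)) + x| := by rw [sub_neg_eq_add]
        _ ≤ 2 * x ^ 2 * (1 - q) := this
    · have : Filter.Tendsto (fun q : ℝ => 2 * x ^ 2 * (1 - q)) (nhds 1)
          (nhds (2 * x ^ 2 * (1 - 1))) :=
        (continuous_const.mul (continuous_const.sub continuous_id)).tendsto 1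
      simpa using this.mono_left nhdsWithin_le_nhds
  have hcont : Filter.Tendsto (fun q : ℝ => Real.exp (∑' j : ℕ,
      Real.log (1 - x * (1 - q) * q ^ j))) (nhdsWithin 1 (Set.Iio 1))
      (nhds (Real.exp (-x))) := (Real.continuous_exp.continuousAt.tendsto).comp hS
  apply hcont.congr' (Filter.eventually_of_mem hmem ?_)
  intro q hq
  obtain ⟨h0, h1, h2⟩ := hcond q hq
  exact (tprod_eq_exp h0 h1 h2).symm
end

section
/- For every real number x, the limit as q tends to 1 from below of ∏_{j=0}^∞ (1 − x√(1−q)·q^j)(1 + x√(1−q)·q^j) exists and equals e^{−x²/2}. -/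
open Real Filter Set

private lemma log_one_sub_le {c : ℝ} (h0 : 0 ≤ c) (h1 : c < 1) : Real.log (1 - c) ≤ -c := by
  have := Real.log_le_sub_one_of_pos (show (0:ℝ) < 1 - c by linarith)
  linarith

private lemma neg_div_le_log_one_sub {c : ℝ} (h0 : 0 ≤ c) (h1 : c < 1) :
    -(c / (1 - c)) ≤ Real.log (1 - c) := by
  have hpos : (0:ℝ) < 1 - c := by linarith
  have := Real.log_le_sub_one_of_pos (show (0:ℝ) < (1 - c)⁻¹ by positivity)
  rw [Real.log_inv] at this
  have h2 : (1 - c)⁻¹ - 1 = c / (1 - c) := by field_simp; ring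
  linarith [h2 ▸ this]

set_option maxHeartbeats 1000000 in
/-- Key pointwise lemma for fixed `q`. -/
private lemma key (x q : ℝ) (hq0 : 0 < q) (hq1 : q < 1) (hε : x ^ 2 * (1 - q) < 1/2) :
    (∏' j : ℕ, ((1 - x * Real.sqrt (1 - q) * q ^ j) * (1 + x * Real.sqrt (1 - q) * q ^ j)))
      = Real.exp (∑' j : ℕ, Real.log (1 - x ^ 2 * (1 - q) * (q ^ 2) ^ j))
    ∧ -(x ^ 2 / ((1 + q) * (1 - x ^ 2 * (1 - q))))
        ≤ ∑' j : ℕ, Real.log (1 - x ^ 2 * (1 - q) * (q ^ 2) ^ j)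
    ∧ (∑' j : ℕ, Real.log (1 - x ^ 2 * (1 - q) * (q ^ 2) ^ j)) ≤ -(x ^ 2 / (1 + q)) := by
  set ε : ℝ := x ^ 2 * (1 - q) with hεdef
  have hε0 : 0 ≤ ε := mul_nonneg (sq_nonneg x) (by linarith)
  have hr0 : (0:ℝ) ≤ q ^ 2 := sq_nonneg q
  have hr1 : q ^ 2 < 1 := by nlinarith
  have hc0 : ∀ j : ℕ, 0 ≤ ε * (q ^ 2) ^ j := fun j =>
    mul_nonneg hε0 (pow_nonneg (sq_nonneg q) j)
  have hcle : ∀ j : ℕ, ε * (q ^ 2) ^ j ≤ ε := fun j => by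
    have := pow_le_one₀ hr0 hr1.le (n := j)
    nlinarith
  have hpos : ∀ j : ℕ, 0 < 1 - ε * (q ^ 2) ^ j := fun j => by
    have := hcle j; linarith
  -- summability of logs
  have hgeo_sum : Summable (fun j : ℕ => (q ^ 2) ^ j) := summable_geometric_of_lt_one hr0 hr1
  have hlog_sum : Summable (fun j : ℕ => Real.log (1 - ε * (q ^ 2) ^ j)) := by
    apply Summable.of_abs
    have hb : ∀ j : ℕ, |Real.log (1 - ε * (q ^ 2) ^ j)| ≤ (2 * ε) * (q ^ 2) ^ j := ?_
    · exact Summable.of_nonneg_of_le (fun j => abs_nonneg _) hb (hgeo_sum.mul_left (2 * ε))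
    intro j
    set c : ℝ := ε * (q ^ 2) ^ j with hcdef
    have h0 : 0 ≤ c := hc0 j
    have h1 : c < 1 := by have := hcle j; linarith
    have hle := log_one_sub_le h0 h1
    have hge := neg_div_le_log_one_sub h0 h1
    have hnp : Real.log (1 - c) ≤ 0 := by linarith
    rw [abs_of_nonpos hnp]
    have hdiv : c / (1 - c) ≤ 2 * c := by
      rw [div_le_iff₀ (by linarith : (0:ℝ) < 1 - c)]
      have := hcle j; nlinarith
    have : 2 * c = 2 * ε * (q ^ 2) ^ j := by rw [hcdef]; ring
    linarith
  have hgeo : ∑' j : ℕ, (q ^ 2) ^ j = (1 - q ^ 2)⁻¹ := tsum_geometric_of_lt_one hr0 hr1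
  have h1q : (0:ℝ) < 1 + q := by linarith
  have h1r : (0:ℝ) < 1 - q ^ 2 := by linarith
  have h1ε : (0:ℝ) < 1 - ε := by linarith
  refine ⟨?_, ?_, ?_⟩
  · -- product = exp of sum of logs
    have hfac : ∀ j : ℕ, (1 - x * Real.sqrt (1 - q) * q ^ j) * (1 + x * Real.sqrt (1 - q) * q ^ j)
        = 1 - ε * (q ^ 2) ^ j := by
      intro j
      have hs : Real.sqrt (1 - q) ^ 2 = 1 - q := Real.sq_sqrt (by linarith)
      have : (1 - x * Real.sqrt (1 - q) * q ^ j) * (1 + x * Real.sqrt (1 - q) * q ^ j)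
          = 1 - x ^ 2 * Real.sqrt (1 - q) ^ 2 * (q ^ 2) ^ j := by ring
      rw [this, hs, hεdef]
    rw [tprod_congr hfac]
    have hexp : (fun j : ℕ => Real.exp (Real.log (1 - ε * (q ^ 2) ^ j)))
        = fun j : ℕ => 1 - ε * (q ^ 2) ^ j := funext fun j => Real.exp_log (hpos j)
    have hp : HasProd (fun j : ℕ => 1 - ε * (q ^ 2) ^ j)
        (Real.exp (∑' j : ℕ, Real.log (1 - ε * (q ^ 2) ^ j))) := by
      have := hlog_sum.hasSum.rexp
      rwa [show rexp ∘ (fun j : ℕ => Real.log (1 - ε * (q ^ 2) ^ j)) = _ from hexp] at this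
    exact hp.tprod_eq
  · -- lower bound
    have hval : ∑' j : ℕ, (-(ε / (1 - ε))) * (q ^ 2) ^ j
        = -(x ^ 2 / ((1 + q) * (1 - ε))) := by
      rw [tsum_mul_left, hgeo, hεdef]
      have hne1 : (1:ℝ) - q ^ 2 ≠ 0 := ne_of_gt h1r
      have hne2 : (1:ℝ) + q ≠ 0 := ne_of_gt h1q
      have hne3 : (1:ℝ) - x ^ 2 * (1 - q) ≠ 0 := by rw [← hεdef]; exact ne_of_gt h1ε
      field_simp
      ring
    rw [← hval]
    apply Summable.tsum_le_tsum _ (hgeo_sum.mul_left _) hlog_sum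
    intro j
    set c : ℝ := ε * (q ^ 2) ^ j with hcdef
    have h0 : 0 ≤ c := hc0 j
    have h1 : c < 1 := by have := hcle j; linarith
    have hge := neg_div_le_log_one_sub h0 h1
    have hdiv : c / (1 - c) ≤ c / (1 - ε) := by
      rw [div_le_div_iff₀ (by linarith) h1ε]
      have := hcle j; nlinarith
    have heq : (-(ε / (1 - ε))) * (q ^ 2) ^ j = -(c / (1 - ε)) := by
      rw [hcdef]; ring
    rw [heq]
    linarith
  · -- upper bound
    have hval : ∑' j : ℕ, (-ε) * (q ^ 2) ^ j = -(x ^ 2 / (1 + q)) := by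
      rw [tsum_mul_left, hgeo, hεdef]
      have hne1 : (1:ℝ) - q ^ 2 ≠ 0 := ne_of_gt h1r
      have hne2 : (1:ℝ) + q ≠ 0 := ne_of_gt h1q
      field_simp
      ring
    rw [← hval]
    apply Summable.tsum_le_tsum _ hlog_sum (hgeo_sum.mul_left _)
    intro j
    have h0 := hc0 j
    have h1 : ε * (q ^ 2) ^ j < 1 := by have := hcle j; linarith
    have := log_one_sub_le h0 h1
    linarith

/-- For every real number `x`, the limit as `q → 1⁻` of
`∏_{j=0}^∞ (1 − x√(1−q)q^j)(1 + x√(1−q)q^j)` exists and equals `e^{−x²/2}`. -/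
theorem qGaussian_tendsto_gaussian (x : ℝ) :
    Filter.Tendsto
      (fun q : ℝ => ∏' j : ℕ,
        ((1 - x * Real.sqrt (1 - q) * q ^ j) * (1 + x * Real.sqrt (1 - q) * q ^ j)))
      (nhdsWithin 1 (Set.Iio 1)) (nhds (Real.exp (-x ^ 2 / 2))) := by
  set δ : ℝ := min (1/2) (1 / (2 * (x ^ 2 + 1))) with hδdef
  have hδ0 : 0 < δ := lt_min (by norm_num) (by positivity)
  have hδle : δ ≤ 1/2 := min_le_left _ _
  have hmem : Set.Ioo (1 - δ) 1 ∈ nhdsWithin (1:ℝ) (Set.Iio 1) :=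
    Ioo_mem_nhdsLT_of_mem ⟨by linarith, le_refl _⟩
  have hgood : ∀ q ∈ Set.Ioo (1 - δ) 1, 0 < q ∧ q < 1 ∧ x ^ 2 * (1 - q) < 1/2 := by
    intro q hq
    obtain ⟨hq1, hq2⟩ := hq
    have hq0 : 0 < q := by linarith
    refine ⟨hq0, hq2, ?_⟩
    have h1 : 1 - q < δ := by linarith
    have h2 : δ ≤ 1 / (2 * (x ^ 2 + 1)) := min_le_right _ _
    have h3 : x ^ 2 * (1 - q) ≤ (x ^ 2 + 1) * (1 - q) := by nlinarith
    have h4 : (x ^ 2 + 1) * (1 - q) < (x ^ 2 + 1) * (1 / (2 * (x ^ 2 + 1))) := by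
      apply mul_lt_mul_of_pos_left (by linarith) (by positivity)
    have h5 : (x ^ 2 + 1) * (1 / (2 * (x ^ 2 + 1))) = 1/2 := by
      field_simp
    linarith
  set g : ℝ → ℝ := fun q => ∑' j : ℕ, Real.log (1 - x ^ 2 * (1 - q) * (q ^ 2) ^ j) with hgdef
  have hL : Tendsto (fun q : ℝ => -(x ^ 2 / ((1 + q) * (1 - x ^ 2 * (1 - q)))))
      (nhdsWithin 1 (Set.Iio 1)) (nhds (-(x ^ 2 / 2))) := by
    have hc : ContinuousAt (fun q : ℝ => -(x ^ 2 / ((1 + q) * (1 - x ^ 2 * (1 - q))))) 1 := by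
      apply ContinuousAt.neg
      apply ContinuousAt.div continuousAt_const (by fun_prop)
      norm_num
    have := hc.tendsto.mono_left (nhdsWithin_le_nhds (s := Set.Iio 1))
    convert this using 2
    norm_num
  have hU : Tendsto (fun q : ℝ => -(x ^ 2 / (1 + q)))
      (nhdsWithin 1 (Set.Iio 1)) (nhds (-(x ^ 2 / 2))) := by
    have hc : ContinuousAt (fun q : ℝ => -(x ^ 2 / (1 + q))) 1 := by
      apply ContinuousAt.neg
      apply ContinuousAt.div continuousAt_const (by fun_prop)
      norm_num
    have := hc.tendsto.mono_left (nhdsWithin_le_nhds (s := Set.Iio 1))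
    convert this using 2
    norm_num
  have hg : Tendsto g (nhdsWithin 1 (Set.Iio 1)) (nhds (-(x ^ 2 / 2))) := by
    apply tendsto_of_tendsto_of_tendsto_of_le_of_le' hL hU
    · filter_upwards [hmem] with q hq
      obtain ⟨h0, h1, h2⟩ := hgood q hq
      exact (key x q h0 h1 h2).2.1
    · filter_upwards [hmem] with q hq
      obtain ⟨h0, h1, h2⟩ := hgood q hq
      exact (key x q h0 h1 h2).2.2
  have hexp : Tendsto (fun q : ℝ => Real.exp (g q)) (nhdsWithin 1 (Set.Iio 1))
      (nhds (Real.exp (-(x ^ 2 / 2)))) := (Real.continuous_exp.tendsto _).comp hg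
  have : Real.exp (-x ^ 2 / 2) = Real.exp (-(x ^ 2 / 2)) := by ring_nf
  rw [this]
  apply hexp.congr'
  filter_upwards [hmem] with q hq
  obtain ⟨h0, h1, h2⟩ := hgood q hq
  exact ((key x q h0 h1 h2).1).symm
end

section
/- Let t be real with 0 < t < 1, let u be a nonzero real number, and let l, N be integers with 0 ≤ l ≤ N. Then ∑_{s=0}^{l} t^{(N−l+s)(N−l+s−1)/2} (−1)^s u^{−s} [N choose l−s]_t [N−l+s choose s]_{t^{−1}} = (−1)^l t^{N(N−1)/2 + l} (t^{−N};t)_l (u^{−1};t)_l / (t;t)_l. -/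
/-- The finite `q`-Pochhammer symbol `(z;t)_k = ∏_{i=0}^{k−1} (1 − z t^i)`. -/
noncomputable def qPoch (z t : ℝ) (k : ℕ) : ℝ := ∏ i ∈ Finset.range k, (1 - z * t ^ i)

/-- The `t`-binomial coefficient `[n choose k]_t = (t;t)_n / ((t;t)_k (t;t)_{n−k})`. -/
noncomputable def tBinom (t : ℝ) (n k : ℕ) : ℝ :=
  qPoch t t n / (qPoch t t k * qPoch t t (n - k))

lemma qPoch_succ (z t : ℝ) (k : ℕ) : qPoch z t (k+1) = qPoch z t k * (1 - z * t^k) :=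
  Finset.prod_range_succ _ _

lemma qPoch_zero (z t : ℝ) : qPoch z t 0 = 1 := rfl

lemma P_pos {t : ℝ} (ht0 : 0 < t) (ht1 : t < 1) (k : ℕ) : 0 < qPoch t t k := by
  apply Finset.prod_pos
  intro i _
  have : t * t ^ i < 1 := by
    calc t * t ^ i ≤ t * 1 := by
          exact mul_le_mul_of_nonneg_left (pow_le_one₀ ht0.le ht1.le) ht0.le
    _ = t := mul_one t
    _ < 1 := ht1
  linarith

lemma P_ne {t : ℝ} (ht0 : 0 < t) (ht1 : t < 1) (k : ℕ) : qPoch t t k ≠ 0 :=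
  (P_pos ht0 ht1 k).ne'

-- triangle number helpers
lemma two_mul_tri (k : ℕ) : 2 * (k * (k-1) / 2) = k * (k-1) := by
  rcases k with _ | n
  · simp
  · simp only [Nat.add_sub_cancel]
    exact Nat.two_mul_div_two_of_even (by simpa [mul_comm] using Nat.even_mul_succ_self n)

lemma tri_add (a s : ℕ) : (a+s) * (a+s-1) / 2 = a*(a-1)/2 + a*s + s*(s-1)/2 := by
  apply Nat.eq_of_mul_eq_mul_left (show 0 < 2 by norm_num)
  rw [two_mul_tri, Nat.mul_add, Nat.mul_add, two_mul_tri, two_mul_tri]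
  rcases a with _ | a
  · simp
  rcases s with _ | s
  · simp
  simp only [Nat.add_sub_cancel]
  have h : a + 1 + (s + 1) - 1 = a + s + 1 := by omega
  rw [h]
  ring

-- Pascal: [l+1, r+1] = [l, r+1] + t^(l-r) [l, r]  for r ≤ l... (need r+1 ≤ l+1; valid for r ≤ l)
lemma one_sub_ne {t : ℝ} (ht0 : 0 < t) (ht1 : t < 1) (k : ℕ) : (1:ℝ) - t * t ^ k ≠ 0 := by
  have h : t * t ^ k < 1 := by
    calc t * t ^ k ≤ t * 1 := mul_le_mul_of_nonneg_left (pow_le_one₀ ht0.le ht1.le) ht0.le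
    _ = t := mul_one t
    _ < 1 := ht1
  linarith

lemma pascal {t : ℝ} (ht0 : 0 < t) (ht1 : t < 1) {l r : ℕ} (hrl : r < l) :
    tBinom t (l+1) (r+1) = tBinom t l (r+1) + t^(l-r) * tBinom t l r := by
    have hr1l : r + 1 ≤ l := hrl
    simp only [tBinom]
    have e1 : l + 1 - (r+1) = (l - (r+1)) + 1 := by omega
    have e2 : l - r = (l - (r+1)) + 1 := by omega
    rw [e1, qPoch_succ t t (l - (r+1)), qPoch_succ t t l, e2,
        qPoch_succ t t (l - (r+1)), qPoch_succ t t r]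
    have h1 := P_ne ht0 ht1 l
    have h2 := P_ne ht0 ht1 r
    have h3 := P_ne ht0 ht1 (l - (r+1))
    have hx := one_sub_ne ht0 ht1 r
    have hy := one_sub_ne ht0 ht1 (l - (r+1))
    have key : (1:ℝ) - t * t^l = (1 - t * t^(l-(r+1))) + t^(l-(r+1)+1) * (1 - t*t^r) := by
      have hA : t * t^(l-(r+1)) = t^(l-(r+1)+1) := by rw [pow_succ]; ring
      have hB : t^(l-(r+1)+1) * (t * t^r) = t * t^l := by
        have h' : t * t^r = t^(r+1) := by rw [pow_succ]; ring
        rw [h', ← pow_add, show l-(r+1)+1+(r+1) = l+1 from by omega, pow_succ]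
        ring
      calc (1:ℝ) - t * t^l
          = 1 - t * t^(l-(r+1)) + (t^(l-(r+1)+1) - t^(l-(r+1)+1) * (t * t^r)) := by
            rw [hA, hB]; ring
        _ = (1 - t * t^(l-(r+1))) + t^(l-(r+1)+1) * (1 - t*t^r) := by ring
    rw [key]
    field_simp

lemma tBinom_zero {t : ℝ} (ht0 : 0 < t) (ht1 : t < 1) (n : ℕ) : tBinom t n 0 = 1 := by
  simp [tBinom, qPoch_zero, div_self (P_ne ht0 ht1 n)]

lemma tBinom_self {t : ℝ} (ht0 : 0 < t) (ht1 : t < 1) (n : ℕ) : tBinom t n n = 1 := by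
  simp [tBinom, qPoch_zero, div_self (P_ne ht0 ht1 n)]

lemma tri_succ (s : ℕ) : (s+1)*((s+1)-1)/2 = s*(s-1)/2 + s := by
  simpa using tri_add s 1

lemma qbinom {t : ℝ} (ht0 : 0 < t) (ht1 : t < 1) (v : ℝ) (l : ℕ) :
    qPoch v t l = ∑ s ∈ Finset.range (l+1),
      (-1:ℝ)^s * t^(s*(s-1)/2) * v^s * tBinom t l s := by
  induction l with
  | zero => simp [qPoch, tBinom_zero ht0 ht1]
  | succ l ih =>
    rw [qPoch_succ, ih]
    conv_rhs => rw [Finset.sum_range_succ, Finset.sum_range_succ']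
    have hsum : ∑ s ∈ Finset.range l,
        (-1:ℝ)^(s+1) * t^((s+1)*((s+1)-1)/2) * v^(s+1) * tBinom t (l+1) (s+1)
        = ∑ s ∈ Finset.range l,
          ((-1:ℝ)^(s+1) * t^((s+1)*((s+1)-1)/2) * v^(s+1) * tBinom t l (s+1)
           - (t^l * v) * ((-1:ℝ)^s * t^(s*(s-1)/2) * v^s * tBinom t l s)) := by
      refine Finset.sum_congr rfl fun s hs => ?_
      have hsl : s < l := Finset.mem_range.mp hs
      have htls : t^(l-s) = t^l / t^s := by
        rw [eq_div_iff (pow_ne_zero s ht0.ne')]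
        rw [← pow_add]
        congr 1
        omega
      rw [pascal ht0 ht1 hsl, tri_succ, pow_add, htls]
      have hts := pow_ne_zero s ht0.ne'
      field_simp
      ring
    rw [hsum, Finset.sum_sub_distrib, ← Finset.mul_sum]
    have hA : ∑ s ∈ Finset.range l,
        (-1:ℝ)^(s+1) * t^((s+1)*((s+1)-1)/2) * v^(s+1) * tBinom t l (s+1)
        = (∑ s ∈ Finset.range (l+1), (-1:ℝ)^s * t^(s*(s-1)/2) * v^s * tBinom t l s)
          - (-1:ℝ)^0 * t^(0*(0-1)/2) * v^0 * tBinom t l 0 := by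
      rw [Finset.sum_range_succ']
      ring
    have hB : ∑ s ∈ Finset.range l, (-1:ℝ)^s * t^(s*(s-1)/2) * v^s * tBinom t l s
        = (∑ s ∈ Finset.range (l+1), (-1:ℝ)^s * t^(s*(s-1)/2) * v^s * tBinom t l s)
          - (-1:ℝ)^l * t^(l*(l-1)/2) * v^l * tBinom t l l := by
      rw [Finset.sum_range_succ]
      ring
    rw [hA, hB, tBinom_zero ht0 ht1, tBinom_zero ht0 ht1, tBinom_self ht0 ht1,
        tBinom_self ht0 ht1, tri_succ, pow_add]
    ring

lemma prod_split {t : ℝ} {N l : ℕ} (h : l ≤ N) :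
    (∏ i ∈ Finset.range l, (1 - t^(N-i))) * qPoch t t (N - l) = qPoch t t N := by
  induction l with
  | zero => simp
  | succ l ih =>
    have hl : l ≤ N := by omega
    rw [Finset.prod_range_succ]
    have e : N - l = (N - (l+1)) + 1 := by omega
    have e2 : t * t^(N - (l+1)) = t^(N-l) := by
      rw [← pow_succ']
      congr 1
      omega
    calc (∏ i ∈ Finset.range l, (1 - t^(N-i))) * (1 - t^(N-l)) * qPoch t t (N - (l+1))
        = (∏ i ∈ Finset.range l, (1 - t^(N-i))) * (qPoch t t (N - (l+1)) * (1 - t * t^(N-(l+1)))) := by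
          rw [e2]; ring
      _ = (∏ i ∈ Finset.range l, (1 - t^(N-i))) * qPoch t t (N - l) := by
          rw [e, qPoch_succ]
      _ = qPoch t t N := ih hl

lemma poch_inv_t {t : ℝ} (ht0 : 0 < t) (ht1 : t < 1) {N l : ℕ} (h : l ≤ N) :
    qPoch ((t^N)⁻¹) t l * t^(l*N) = (-1:ℝ)^l * t^(l*(l-1)/2) *
      (qPoch t t N / qPoch t t (N - l)) := by
  have ht := ht0.ne'
  have h1 : qPoch ((t^N)⁻¹) t l * t^(l*N) =
      ∏ i ∈ Finset.range l, ((1 - (t^N)⁻¹ * t^i) * t^N) := by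
    rw [Finset.prod_mul_distrib, Finset.prod_const, Finset.card_range, ← pow_mul, mul_comm N l]
    rfl
  have h2 : ∀ i ∈ Finset.range l, (1 - (t^N)⁻¹ * t^i) * t^N = (-1) * (t^i * (1 - t^(N-i))) := by
    intro i hi
    have hiN : i ≤ N := le_trans (Finset.mem_range.mp hi).le h
    have hp : t^i * t^(N-i) = t^N := by rw [← pow_add]; congr 1; omega
    have htN : (t:ℝ)^N ≠ 0 := pow_ne_zero _ ht
    field_simp
    linarith [hp]
  rw [h1, Finset.prod_congr rfl h2, Finset.prod_mul_distrib, Finset.prod_const,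
      Finset.prod_mul_distrib, Finset.prod_pow_eq_pow_sum, Finset.sum_range_id]
  rw [eq_comm, ← prod_split h (t := t)]
  have := P_ne ht0 ht1 (N - l)
  rw [Finset.card_range]
  field_simp

lemma tri' (k : ℕ) : 2 * (k*(k+1)/2) = k*(k+1) :=
  Nat.two_mul_div_two_of_even (Nat.even_mul_succ_self k)

lemma sum_succ_range (k : ℕ) : ∑ i ∈ Finset.range k, (i+1) = k*(k+1)/2 := by
  apply Nat.eq_of_mul_eq_mul_left (show 0 < 2 by norm_num)
  rw [tri', Finset.mul_sum]
  induction k with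
  | zero => simp
  | succ k ih => rw [Finset.sum_range_succ, ih]; ring

lemma poch_tinv {t : ℝ} (ht0 : 0 < t) (k : ℕ) :
    qPoch t⁻¹ t⁻¹ k * t^(k*(k+1)/2) = (-1:ℝ)^k * qPoch t t k := by
  have ht := ht0.ne'
  have h1 : qPoch t⁻¹ t⁻¹ k * t^(k*(k+1)/2) =
      ∏ i ∈ Finset.range k, ((1 - t⁻¹ * (t⁻¹)^i) * t^(i+1)) := by
    rw [Finset.prod_mul_distrib, Finset.prod_pow_eq_pow_sum, sum_succ_range]
    rfl
  have h2 : ∀ i ∈ Finset.range k, (1 - t⁻¹ * (t⁻¹)^i) * t^(i+1) = (-1) * (1 - t * t^i) := by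
    intro i _
    have key : t⁻¹ * (t⁻¹)^i * t^(i+1) = 1 := by
      rw [inv_pow, pow_succ]
      field_simp
    calc (1 - t⁻¹*(t⁻¹)^i) * t^(i+1) = t^(i+1) - t⁻¹*(t⁻¹)^i*t^(i+1) := by ring
      _ = t^(i+1) - 1 := by rw [key]
      _ = -1 * (1 - t*t^i) := by rw [pow_succ']; ring
  rw [h1, Finset.prod_congr rfl h2, Finset.prod_mul_distrib, Finset.prod_const,
      Finset.card_range]
  rfl

lemma tri9 (s b : ℕ) : s*(s+1)/2 + b*(b+1)/2 + s*b = (s+b)*((s+b)+1)/2 := by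
  apply Nat.eq_of_mul_eq_mul_left (show 0 < 2 by norm_num)
  rw [Nat.mul_add, Nat.mul_add, tri', tri', tri']
  ring

lemma Q_eq {t : ℝ} (ht0 : 0 < t) (k : ℕ) :
    qPoch t⁻¹ t⁻¹ k = (-1:ℝ)^k * qPoch t t k / t^(k*(k+1)/2) := by
  rw [eq_div_iff (pow_ne_zero _ ht0.ne')]
  exact poch_tinv ht0 k

lemma tBinom_inv {t : ℝ} (ht0 : 0 < t) (ht1 : t < 1) {m s : ℕ} (hsm : s ≤ m) :
    tBinom t⁻¹ m s * t^(s*(m-s)) = tBinom t m s := by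
  have ht := ht0.ne'
  simp only [tBinom, Q_eq ht0]
  have h1 := P_ne ht0 ht1 m
  have h2 := P_ne ht0 ht1 s
  have h3 := P_ne ht0 ht1 (m - s)
  have e1 : t^(s*(s+1)/2) * t^((m-s)*((m-s)+1)/2) * t^(s*(m-s)) = t^(m*(m+1)/2) := by
    rw [← pow_add, ← pow_add]
    congr 1
    rw [tri9]
    congr 2 <;> omega
  have e2 : (-1:ℝ)^s * (-1)^(m-s) = (-1)^m := by
    rw [← pow_add]
    congr 1
    omega
  field_simp
  rw [← e2, ← e1]
  ring

lemma tBinom_mul {t : ℝ} (ht0 : 0 < t) (ht1 : t < 1) {s l N : ℕ} (hsl : s ≤ l) (hlN : l ≤ N) :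
    tBinom t N (l-s) * tBinom t (N-l+s) s = tBinom t N l * tBinom t l s := by
  simp only [tBinom]
  rw [show N - (l - s) = N - l + s from by omega, show N - l + s - s = N - l from by omega]
  have h1 := P_ne ht0 ht1 N
  have h2 := P_ne ht0 ht1 l
  have h3 := P_ne ht0 ht1 s
  have h4 := P_ne ht0 ht1 (l - s)
  have h5 := P_ne ht0 ht1 (N - l)
  have h6 := P_ne ht0 ht1 (N - l + s)
  field_simp

lemma expo {l N : ℕ} (h : l ≤ N) :
    N*(N-1)/2 + l + l*(l-1)/2 = (N-l)*(N-l-1)/2 + l*N := by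
  obtain ⟨a, rfl⟩ : ∃ a, N = a + l := ⟨N - l, by omega⟩
  rw [show a + l - l = a from by omega, tri_add a l]
  have h2 : l*(l-1) + l = l*l := by
    cases l with
    | zero => simp
    | succ n => simp only [Nat.add_sub_cancel]; ring
  calc a*(a-1)/2 + a*l + l*(l-1)/2 + l + l*(l-1)/2
      = a*(a-1)/2 + a*l + (2*(l*(l-1)/2) + l) := by ring
    _ = a*(a-1)/2 + a*l + (l*(l-1) + l) := by rw [two_mul_tri]
    _ = a*(a-1)/2 + a*l + l*l := by rw [h2]
    _ = a*(a-1)/2 + l*(a+l) := by ring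


/-- For `0 < t < 1`, `u ≠ 0` and integers `0 ≤ l ≤ N`:
`∑_{s=0}^l t^{(N−l+s)(N−l+s−1)/2} (−1)^s u^{−s} [N choose l−s]_t [N−l+s choose s]_{t⁻¹}
  = (−1)^l t^{N(N−1)/2 + l} (t^{−N};t)_l (u^{−1};t)_l / (t;t)_l`. -/
theorem qBinomial_sum_identity (t : ℝ) (ht0 : 0 < t) (ht1 : t < 1) (u : ℝ) (hu : u ≠ 0)
    (l N : ℕ) (hlN : l ≤ N) :
    ∑ s ∈ Finset.range (l + 1),
      t ^ ((N - l + s) * (N - l + s - 1) / 2) * (-1 : ℝ) ^ s * u⁻¹ ^ s *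
        tBinom t N (l - s) * tBinom t⁻¹ (N - l + s) s =
      (-1 : ℝ) ^ l * t ^ (N * (N - 1) / 2 + l) * qPoch ((t ^ N)⁻¹) t l * qPoch u⁻¹ t l /
        qPoch t t l := by
  have ht := ht0.ne'
  have hstep : ∀ s ∈ Finset.range (l+1),
      t ^ ((N - l + s) * (N - l + s - 1) / 2) * (-1 : ℝ) ^ s * u⁻¹ ^ s *
        tBinom t N (l - s) * tBinom t⁻¹ (N - l + s) s
      = (t^((N-l)*(N-l-1)/2) * tBinom t N l) *
        ((-1:ℝ)^s * t^(s*(s-1)/2) * u⁻¹^s * tBinom t l s) := by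
    intro s hs
    have hsl : s ≤ l := by
      have := Finset.mem_range.mp hs
      omega
    have hinv : tBinom t⁻¹ (N-l+s) s = tBinom t (N-l+s) s / t^(s*(N-l)) := by
      rw [eq_div_iff (pow_ne_zero _ ht)]
      have h := tBinom_inv ht0 ht1 (m := N-l+s) (s := s) (by omega)
      rwa [show N-l+s-s = N-l from by omega] at h
    have hmul := tBinom_mul ht0 ht1 hsl hlN
    calc t ^ ((N - l + s) * (N - l + s - 1) / 2) * (-1 : ℝ) ^ s * u⁻¹ ^ s *
        tBinom t N (l - s) * tBinom t⁻¹ (N - l + s) s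
        = (tBinom t N (l-s) * tBinom t (N-l+s) s) *
          (t^((N-l)*(N-l-1)/2) * (t^((N-l)*s) / t^(s*(N-l))) * t^(s*(s-1)/2) *
            (-1:ℝ)^s * u⁻¹^s) := by
          rw [hinv, tri_add (N-l) s, pow_add, pow_add]
          ring
      _ = (tBinom t N l * tBinom t l s) *
          (t^((N-l)*(N-l-1)/2) * 1 * t^(s*(s-1)/2) * (-1:ℝ)^s * u⁻¹^s) := by
          rw [hmul, mul_comm (N-l) s, div_self (pow_ne_zero _ ht)]
      _ = (t^((N-l)*(N-l-1)/2) * tBinom t N l) *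
          ((-1:ℝ)^s * t^(s*(s-1)/2) * u⁻¹^s * tBinom t l s) := by ring
  rw [Finset.sum_congr rfl hstep, ← Finset.mul_sum, ← qbinom ht0 ht1 u⁻¹ l]
  have hpoch : qPoch ((t^N)⁻¹) t l =
      (-1:ℝ)^l * t^(l*(l-1)/2) * (qPoch t t N / qPoch t t (N - l)) / t^(l*N) := by
    rw [eq_div_iff (pow_ne_zero _ ht)]
    exact poch_inv_t ht0 ht1 hlN
  have hc : t^((N-l)*(N-l-1)/2) * tBinom t N l * qPoch t t l =
      (-1:ℝ)^l * t^(N*(N-1)/2 + l) * qPoch ((t^N)⁻¹) t l := by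
    rw [tBinom, hpoch]
    have h1 := P_ne ht0 ht1 N
    have h2 := P_ne ht0 ht1 l
    have h5 := P_ne ht0 ht1 (N - l)
    have hE : t^(N*(N-1)/2+l) * t^(l*(l-1)/2) = t^((N-l)*(N-l-1)/2) * t^(l*N) := by
      rw [← pow_add, ← pow_add]
      congr 1
      exact expo hlN
    have hsgn : (-1:ℝ)^l * (-1)^l = 1 := by
      rw [← pow_add]
      exact Even.neg_one_pow ⟨l, rfl⟩
    field_simp
    linear_combination (-(t^(N*(N-1)/2+l) * t^(l*(l-1)/2))) * hsgn - hE
  rw [eq_div_iff (P_ne ht0 ht1 l)]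
  linear_combination qPoch u⁻¹ t l * hc
end

section
/- Let κ be a nonempty partition and let q, t be real numbers with 0 < q < 1 and 0 < t < 1. Then u_κ(q,t)/h_κ(q,t) = (−1)^{|κ|−1} ((1 − q^{|κ|})/(1 − t^{|κ|})) · u_{κ′}(t,q)/h_{κ′}(t,q), where u_{κ′}(t,q) and h_{κ′}(t,q) denote u and h for the conjugate partition with the two arguments interchanged; all denominators appearing are nonzero. -/
/-- The arm length `a(s) = κ_i − j` of the cell `s = (i,j)` (zero-indexed) of a
Young diagram. -/
def armLen (μ : YoungDiagram) (c : ℕ × ℕ) : ℕ := μ.rowLen c.1 - (c.2 + 1)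

/-- The leg length `l(s) = κ′_j − i` of the cell `s = (i,j)` (zero-indexed) of a
Young diagram. -/
def legLen (μ : YoungDiagram) (c : ℕ × ℕ) : ℕ := μ.colLen c.2 - (c.1 + 1)

/-- The statistic `n(κ) = ∑_i (i−1)κ_i`, i.e. the sum over all cells of the
(zero-indexed) row index. -/
def nStat (μ : YoungDiagram) : ℕ := ∑ c ∈ μ.cells, c.1

/-- `h_κ(q,t) := ∏_{s∈κ} (1 − q^{a(s)} t^{l(s)+1})`. -/
noncomputable def hQT (μ : YoungDiagram) (q t : ℝ) : ℝ :=
  ∏ c ∈ μ.cells, (1 - q ^ armLen μ c * t ^ (legLen μ c + 1))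

/-- `h′_κ(q,t) := ∏_{s∈κ} (1 − q^{a(s)+1} t^{l(s)})`. -/
noncomputable def h'QT (μ : YoungDiagram) (q t : ℝ) : ℝ :=
  ∏ c ∈ μ.cells, (1 - q ^ (armLen μ c + 1) * t ^ legLen μ c)

/-- `χ_κ(q,t) := ∏_{s=(i,j)∈κ, s≠(1,1)} (t^{i−1} − q^{j−1})`, with cells zero-indexed. -/
noncomputable def chiQT (μ : YoungDiagram) (q t : ℝ) : ℝ :=
  ∏ c ∈ μ.cells.erase (0, 0), (t ^ c.1 - q ^ c.2)

/-- `u_κ(q,t) := (1 − q^{|κ|}) χ_κ(q,t) / h′_κ(q,t)`. -/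
noncomputable def uQT (μ : YoungDiagram) (q t : ℝ) : ℝ :=
  (1 - q ^ μ.cells.card) * chiQT μ q t / h'QT μ q t

lemma prod_transpose_cells (μ : YoungDiagram) (f : ℕ × ℕ → ℝ) :
    ∏ c ∈ μ.transpose.cells, f c = ∏ c ∈ μ.cells, f c.swap := by
  apply Finset.prod_nbij' Prod.swap Prod.swap <;>
    simp [YoungDiagram.mem_cells, YoungDiagram.mem_transpose]

lemma prod_transpose_cells_erase (μ : YoungDiagram) (f : ℕ × ℕ → ℝ) :
    ∏ c ∈ μ.transpose.cells.erase (0, 0), f c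
      = ∏ c ∈ μ.cells.erase (0, 0), f c.swap := by
  apply Finset.prod_nbij' Prod.swap Prod.swap <;>
    simp [YoungDiagram.mem_cells, YoungDiagram.mem_transpose, Prod.ext_iff] <;>
    tauto

lemma card_transpose_cells (μ : YoungDiagram) :
    μ.transpose.cells.card = μ.cells.card := by
  apply Finset.card_nbij' Prod.swap Prod.swap <;>
    simp [Set.MapsTo, Set.LeftInvOn, Set.RightInvOn, YoungDiagram.mem_cells, YoungDiagram.mem_transpose]

lemma armLen_transpose (μ : YoungDiagram) (c : ℕ × ℕ) :
    armLen μ.transpose c = legLen μ c.swap := by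
  simp [armLen, legLen, YoungDiagram.rowLen_transpose]

lemma legLen_transpose (μ : YoungDiagram) (c : ℕ × ℕ) :
    legLen μ.transpose c = armLen μ c.swap := by
  simp [armLen, legLen, YoungDiagram.colLen_transpose]

lemma hQT_transpose (μ : YoungDiagram) (q t : ℝ) :
    hQT μ.transpose t q = h'QT μ q t := by
  rw [hQT, prod_transpose_cells, h'QT]
  apply Finset.prod_congr rfl
  intro c _
  rw [armLen_transpose, legLen_transpose, Prod.swap_swap, mul_comm]

lemma h'QT_transpose (μ : YoungDiagram) (q t : ℝ) :
    h'QT μ.transpose t q = hQT μ q t := by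
  rw [h'QT, prod_transpose_cells, hQT]
  apply Finset.prod_congr rfl
  intro c _
  rw [armLen_transpose, legLen_transpose, Prod.swap_swap, mul_comm]

lemma chiQT_transpose (μ : YoungDiagram) (q t : ℝ) :
    chiQT μ.transpose t q = (-1 : ℝ) ^ (μ.cells.card - 1) * chiQT μ q t := by
  have h00 : (0, 0) ∈ μ.cells ∨ μ.cells = ∅ := by
    rcases Finset.eq_empty_or_nonempty μ.cells with h | ⟨c, hc⟩
    · exact Or.inr h
    · refine Or.inl ?_
      rw [YoungDiagram.mem_cells]
      exact μ.up_left_mem (Nat.zero_le _) (Nat.zero_le _)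
        (by rwa [← YoungDiagram.mem_cells])
  rw [chiQT, prod_transpose_cells_erase, chiQT]
  have : ∀ c ∈ μ.cells.erase (0, 0),
      (q ^ (Prod.swap c).1 - t ^ (Prod.swap c).2) = -1 * (t ^ c.1 - q ^ c.2) := by
    intro c _; simp only [Prod.fst_swap, Prod.snd_swap]; ring
  rw [Finset.prod_congr rfl this, Finset.prod_mul_distrib, Finset.prod_const]
  rcases h00 with h | h
  · rw [Finset.card_erase_of_mem h]
  · simp [h]

lemma hQT_pos (μ : YoungDiagram) (q t : ℝ)
    (hq0 : 0 < q) (hq1 : q < 1) (ht0 : 0 < t) (ht1 : t < 1) : 0 < hQT μ q t := by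
  apply Finset.prod_pos
  intro c _
  have h1 : q ^ armLen μ c ≤ 1 := pow_le_one₀ hq0.le hq1.le
  have h2 : t ^ (legLen μ c + 1) < 1 := pow_lt_one₀ ht0.le ht1 (Nat.succ_ne_zero _)
  nlinarith [pow_pos hq0 (armLen μ c), pow_pos ht0 (legLen μ c + 1)]

lemma h'QT_pos (μ : YoungDiagram) (q t : ℝ)
    (hq0 : 0 < q) (hq1 : q < 1) (ht0 : 0 < t) (ht1 : t < 1) : 0 < h'QT μ q t := by
  apply Finset.prod_pos
  intro c _
  have h1 : t ^ legLen μ c ≤ 1 := pow_le_one₀ ht0.le ht1.le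
  have h2 : q ^ (armLen μ c + 1) < 1 := pow_lt_one₀ hq0.le hq1 (Nat.succ_ne_zero _)
  nlinarith [pow_pos ht0 (legLen μ c), pow_pos hq0 (armLen μ c + 1)]

/-- For a nonempty partition `κ` and `0 < q < 1`, `0 < t < 1`:
`u_κ(q,t)/h_κ(q,t) = (−1)^{|κ|−1} ((1 − q^{|κ|})/(1 − t^{|κ|})) u_{κ′}(t,q)/h_{κ′}(t,q)`. -/
theorem u_over_h_conjugate (μ : YoungDiagram) (hμ : μ.cells.Nonempty) (q t : ℝ)
    (hq0 : 0 < q) (hq1 : q < 1) (ht0 : 0 < t) (ht1 : t < 1) :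
    uQT μ q t / hQT μ q t =
      (-1 : ℝ) ^ (μ.cells.card - 1) *
        ((1 - q ^ μ.cells.card) / (1 - t ^ μ.cells.card)) *
        (uQT μ.transpose t q / hQT μ.transpose t q) := by
  have hn : μ.cells.card ≠ 0 := Finset.card_ne_zero_of_mem hμ.choose_spec
  have htn : (1 : ℝ) - t ^ μ.cells.card ≠ 0 := by
    have := pow_lt_one₀ ht0.le ht1 hn; linarith
  have hh : hQT μ q t ≠ 0 := (hQT_pos μ q t hq0 hq1 ht0 ht1).ne'
  have hh' : h'QT μ q t ≠ 0 := (h'QT_pos μ q t hq0 hq1 ht0 ht1).ne'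
  rw [uQT, uQT, hQT_transpose, h'QT_transpose, chiQT_transpose, card_transpose_cells]
  set A : ℝ := (-1 : ℝ) ^ (μ.cells.card - 1) with hA
  have hAA : A * A = 1 := by
    rw [hA, ← pow_add, ← two_mul, pow_mul]; norm_num
  have h2 : ((-1 : ℝ)) ^ ((μ.cells.card - 1) * 2) = 1 := by
    rw [mul_comm, pow_mul]; norm_num
  field_simp
  ring_nf
  simp only [sq, hAA]
  ring
end

section
/- For every nonempty partition κ and every nonzero real number α, (κ_1 − 1)! · ∏_{i=2}^{ℓ(κ)} ∏_{j=0}^{κ_i−1} (j − (i−1)/α) = (−1/α)^{|κ|−1} · (κ′_1 − 1)! · ∏_{i=2}^{ℓ(κ′)} ∏_{j=0}^{κ′_i−1} (j − (i−1)α). -/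
/-!
Every cell `(i, j) ≠ (0, 0)` of `κ` contributes the factor `j - i/α` to the left-hand side, the
first row supplying `(κ_1 - 1)!`; likewise the right-hand side is the product of `i - jα` over the
same cells, read off the transposed diagram. Since `i - jα = -α (j - i/α)`, the two products differ
by `(-α)^(|κ| - 1)`, which cancels against `(-1/α)^(|κ| - 1)`.
-/

open Finset Nat

theorem prod_range_ite_eq_zero_one_self_eq_factorial {R : Type*} [CommSemiring R] (n : ℕ) :
    ∏ j ∈ range n, (if j = 0 then 1 else (j : R)) = ((n - 1)! : R) := by
  cases n with
  | zero => simp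
  | succ n =>
    rw [prod_range_succ', if_pos rfl, mul_one, Nat.add_sub_cancel, ← prod_range_add_one_eq_factorial]
    push_cast
    exact prod_congr rfl fun j _ => by simp

theorem sub_mul_eq_neg_mul_sub_mul_inv {K : Type*} [Field K] {α : K} (hα : α ≠ 0) (x y : K) :
    x - y * α = -α * (y - x * α⁻¹) := by
  field_simp
  ring

namespace YoungDiagram

variable (μ : YoungDiagram)

theorem mk_mem_iff_lt_colLen_and_lt_rowLen {i j : ℕ} :
    (i, j) ∈ μ ↔ i < μ.colLen 0 ∧ j < μ.rowLen i := by
  rw [← mem_iff_lt_colLen, ← mem_iff_lt_rowLen]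
  exact ⟨fun h => ⟨μ.up_left_mem le_rfl (Nat.zero_le j) h, h⟩, And.right⟩

theorem prod_cells_eq_prod_range_rowLen {M : Type*} [CommMonoid M] (f : ℕ × ℕ → M) :
    ∏ c ∈ μ.cells, f c = ∏ i ∈ range (μ.colLen 0), ∏ j ∈ range (μ.rowLen i), f (i, j) :=
  prod_finset_product _ _ _ fun ⟨i, j⟩ => by
    simp only [mem_cells, mem_range, mk_mem_iff_lt_colLen_and_lt_rowLen]

theorem cells_eq_empty_of_origin_notMem (h : (0, 0) ∉ μ) : μ.cells = ∅ :=
  eq_empty_of_forall_notMem fun ⟨_, _⟩ hc =>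
    h (μ.up_left_mem (Nat.zero_le _) (Nat.zero_le _) ((mem_cells _).1 hc))

theorem card_cells_erase_origin : #(μ.cells.erase (0, 0)) = #μ.cells - 1 := by
  by_cases h : (0, 0) ∈ μ
  · exact card_erase_of_mem ((mem_cells _).2 h)
  · simp [cells_eq_empty_of_origin_notMem μ h]

theorem prod_transpose_cells_erase_origin {M : Type*} [CommMonoid M] (f : ℕ × ℕ → M) :
    ∏ c ∈ μ.transpose.cells.erase (0, 0), f c = ∏ c ∈ μ.cells.erase (0, 0), f c.swap :=
  prod_equiv (Equiv.prodComm ℕ ℕ) (fun ⟨i, j⟩ => by simp [and_comm]) fun _ _ => rfl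

theorem prod_cells_erase_origin_sub_mul {R : Type*} [CommRing R] (β : R) :
    ∏ c ∈ μ.cells.erase (0, 0), ((c.2 : R) - c.1 * β) =
      ((μ.rowLen 0 - 1)! : R) * ∏ i ∈ Icc 2 (μ.colLen 0), ∏ j ∈ range (μ.rowLen (i - 1)),
        ((j : R) - ((i - 1 : ℕ) : R) * β) := by
  by_cases h : (0, 0) ∈ μ
  · obtain ⟨n, hn⟩ := Nat.exists_eq_add_one_of_ne_zero (mem_iff_lt_colLen.1 h).ne'
    let g : ℕ × ℕ → R := fun c => if c = (0, 0) then 1 else (c.2 : R) - c.1 * β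
    have hrow₀ : ∏ j ∈ range (μ.rowLen 0), g (0, j) = ((μ.rowLen 0 - 1)! : R) := by
      rw [← prod_range_ite_eq_zero_one_self_eq_factorial]
      refine prod_congr rfl fun j _ => ?_
      simp [g]
    calc ∏ c ∈ μ.cells.erase (0, 0), ((c.2 : R) - c.1 * β)
        = ∏ c ∈ μ.cells.erase (0, 0), g c :=
          prod_congr rfl fun c hc => (if_neg (ne_of_mem_erase hc)).symm
      _ = ∏ c ∈ μ.cells, g c := prod_erase _ (if_pos rfl)
      _ = _ := by
        rw [prod_cells_eq_prod_range_rowLen, hn, prod_range_succ', hrow₀, mul_comm,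
          ← Ico_add_one_right_eq_Icc, prod_Ico_eq_prod_range,
          show n + 1 + 1 - 2 = n by omega]
        refine congrArg _ (prod_congr rfl fun i _ => ?_)
        rw [show 2 + i - 1 = i + 1 by omega]
        exact prod_congr rfl fun j _ => if_neg (by simp)
  · have hrow : μ.rowLen 0 = 0 := by simpa [mem_iff_lt_rowLen] using h
    have hcol : μ.colLen 0 = 0 := by simpa [mem_iff_lt_colLen] using h
    simp [cells_eq_empty_of_origin_notMem μ h, hrow, hcol]

end YoungDiagram

theorem r_kappa_conjugate_general (μ : YoungDiagram) (α : ℝ) (hα : α ≠ 0) :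
    (Nat.factorial (μ.rowLen 0 - 1) : ℝ) *
        ∏ i ∈ Finset.Icc 2 (μ.colLen 0), ∏ j ∈ Finset.range (μ.rowLen (i - 1)),
          ((j : ℝ) - ((i - 1 : ℕ) : ℝ) / α) =
      (-1 / α) ^ (μ.cells.card - 1) * (Nat.factorial (μ.colLen 0 - 1) : ℝ) *
        ∏ i ∈ Finset.Icc 2 (μ.rowLen 0), ∏ j ∈ Finset.range (μ.colLen (i - 1)),
          ((j : ℝ) - ((i - 1 : ℕ) : ℝ) * α) := by
  have hT := μ.transpose.prod_cells_erase_origin_sub_mul α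
  simp only [YoungDiagram.rowLen_transpose, YoungDiagram.colLen_transpose] at hT
  simp only [div_eq_mul_inv]
  rw [← μ.prod_cells_erase_origin_sub_mul, mul_assoc, ← hT,
    μ.prod_transpose_cells_erase_origin, ← μ.card_cells_erase_origin]
  simp only [Prod.fst_swap, Prod.snd_swap, sub_mul_eq_neg_mul_sub_mul_inv hα, prod_mul_distrib,
    prod_const, ← mul_assoc, ← mul_pow]
  rw [show -1 * α⁻¹ * -α = 1 by field_simp, one_pow, one_mul]

/-- For every nonempty partition `κ` (with parts `κ_i = rowLen (i−1)`, conjugate parts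
`κ′_i = colLen (i−1)`, `ℓ(κ) = colLen 0`, `ℓ(κ′) = rowLen 0`, `|κ| = cells.card`) and
nonzero real `α`:
`(κ_1 − 1)! ∏_{i=2}^{ℓ(κ)} ∏_{j=0}^{κ_i−1} (j − (i−1)/α)
  = (−1/α)^{|κ|−1} (κ′_1 − 1)! ∏_{i=2}^{ℓ(κ′)} ∏_{j=0}^{κ′_i−1} (j − (i−1)α)`. -/
theorem r_kappa_conjugate (μ : YoungDiagram) (hμ : μ.cells.Nonempty) (α : ℝ) (hα : α ≠ 0) :
    (Nat.factorial (μ.rowLen 0 - 1) : ℝ) *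
        ∏ i ∈ Finset.Icc 2 (μ.colLen 0), ∏ j ∈ Finset.range (μ.rowLen (i - 1)),
          ((j : ℝ) - ((i - 1 : ℕ) : ℝ) / α) =
      (-1 / α) ^ (μ.cells.card - 1) * (Nat.factorial (μ.colLen 0 - 1) : ℝ) *
        ∏ i ∈ Finset.Icc 2 (μ.rowLen 0), ∏ j ∈ Finset.range (μ.colLen (i - 1)),
          ((j : ℝ) - ((i - 1 : ℕ) : ℝ) * α) :=
  r_kappa_conjugate_general μ α hα
end

section
/- Let κ be a nonempty partition and let q, t be real numbers with 0 < q < 1 and 0 < t < 1. Then u_κ(q,t) = u_κ(q^{−1},t^{−1}), i.e. (1 − q^{|κ|}) χ_κ(q,t) / h′_κ(q,t) = (1 − q^{−|κ|}) χ_κ(q^{−1},t^{−1}) / h′_κ(q^{−1},t^{−1}); both denominators are nonzero. -/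
lemma mem_lt_rowLen {μ : YoungDiagram} {c : ℕ × ℕ} (hc : c ∈ μ.cells) :
    c.2 < μ.rowLen c.1 := by
  have := (μ.mem_cells c).mp hc
  rwa [show c = (c.1, c.2) from rfl, YoungDiagram.mem_iff_lt_rowLen] at this

lemma mem_lt_colLen {μ : YoungDiagram} {c : ℕ × ℕ} (hc : c ∈ μ.cells) :
    c.1 < μ.colLen c.2 := by
  have := (μ.mem_cells c).mp hc
  rwa [show c = (c.1, c.2) from rfl, YoungDiagram.mem_iff_lt_colLen] at this

lemma sum_armLen (μ : YoungDiagram) :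
    ∑ c ∈ μ.cells, armLen μ c = ∑ c ∈ μ.cells, c.2 := by
  refine Finset.sum_nbij' (fun c : ℕ × ℕ => (c.1, μ.rowLen c.1 - 1 - c.2))
    (fun c : ℕ × ℕ => (c.1, μ.rowLen c.1 - 1 - c.2)) ?_ ?_ ?_ ?_ ?_
  · intro a ha
    have h := mem_lt_rowLen ha
    rw [μ.mem_cells, YoungDiagram.mem_iff_lt_rowLen]
    omega
  · intro a ha
    have h := mem_lt_rowLen ha
    rw [μ.mem_cells, YoungDiagram.mem_iff_lt_rowLen]
    omega
  · intro a ha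
    have h := mem_lt_rowLen ha
    ext <;> simp <;> omega
  · intro a ha
    have h := mem_lt_rowLen ha
    ext <;> simp <;> omega
  · intro a ha
    have h := mem_lt_rowLen ha
    simp only [armLen]
    omega

lemma sum_legLen (μ : YoungDiagram) :
    ∑ c ∈ μ.cells, legLen μ c = ∑ c ∈ μ.cells, c.1 := by
  refine Finset.sum_nbij' (fun c : ℕ × ℕ => (μ.colLen c.2 - 1 - c.1, c.2))
    (fun c : ℕ × ℕ => (μ.colLen c.2 - 1 - c.1, c.2)) ?_ ?_ ?_ ?_ ?_
  · intro a ha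
    have h := mem_lt_colLen ha
    rw [μ.mem_cells, YoungDiagram.mem_iff_lt_colLen]
    omega
  · intro a ha
    have h := mem_lt_colLen ha
    rw [μ.mem_cells, YoungDiagram.mem_iff_lt_colLen]
    omega
  · intro a ha
    have h := mem_lt_colLen ha
    ext <;> simp <;> omega
  · intro a ha
    have h := mem_lt_colLen ha
    ext <;> simp <;> omega
  · intro a ha
    have h := mem_lt_colLen ha
    simp only [legLen]
    omega

/-- For a nonempty partition `κ` and `0 < q < 1`, `0 < t < 1`:
`u_κ(q,t) = u_κ(q⁻¹,t⁻¹)`, i.e.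
`(1 − q^{|κ|}) χ_κ(q,t)/h′_κ(q,t) = (1 − q^{−|κ|}) χ_κ(q⁻¹,t⁻¹)/h′_κ(q⁻¹,t⁻¹)`. -/
theorem u_inverse_invariance (μ : YoungDiagram) (hμ : μ.cells.Nonempty) (q t : ℝ)
    (hq0 : 0 < q) (hq1 : q < 1) (ht0 : 0 < t) (ht1 : t < 1) :
    uQT μ q t = uQT μ q⁻¹ t⁻¹ := by
  have hq : q ≠ 0 := ne_of_gt hq0
  have ht : t ≠ 0 := ne_of_gt ht0
  set n := μ.cells.card with hn
  set S1 := ∑ c ∈ μ.cells, c.1 with hS1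
  set S2 := ∑ c ∈ μ.cells, c.2 with hS2
  have hn1 : 1 ≤ n := Finset.card_pos.mpr hμ
  -- (0,0) is a cell
  have h00 : ((0, 0) : ℕ × ℕ) ∈ μ.cells := by
    obtain ⟨c, hc⟩ := hμ
    rw [μ.mem_cells]
    exact μ.up_left_mem (Nat.zero_le _) (Nat.zero_le _) ((μ.mem_cells c).mp hc)
  have hM : q ^ (S2 + n) * t ^ S1 ≠ 0 :=
    mul_ne_zero (pow_ne_zero _ hq) (pow_ne_zero _ ht)
  -- denominator transformation
  have claim_h : h'QT μ q⁻¹ t⁻¹ * (q ^ (S2 + n) * t ^ S1) = (-1) ^ n * h'QT μ q t := by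
    have h1 : (q : ℝ) ^ (S2 + n) = ∏ c ∈ μ.cells, q ^ (armLen μ c + 1) := by
      rw [Finset.prod_pow_eq_pow_sum]
      congr 1
      rw [Finset.sum_add_distrib, sum_armLen, Finset.sum_const, smul_eq_mul, mul_one]
    have h2 : (t : ℝ) ^ S1 = ∏ c ∈ μ.cells, t ^ legLen μ c := by
      rw [Finset.prod_pow_eq_pow_sum, sum_legLen]
    calc h'QT μ q⁻¹ t⁻¹ * (q ^ (S2 + n) * t ^ S1)
        = ∏ c ∈ μ.cells, ((1 - (q⁻¹) ^ (armLen μ c + 1) * (t⁻¹) ^ legLen μ c)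
            * (q ^ (armLen μ c + 1) * t ^ legLen μ c)) := by
          rw [h'QT, h1, h2, ← Finset.prod_mul_distrib, ← Finset.prod_mul_distrib]
      _ = ∏ c ∈ μ.cells, (-(1 - q ^ (armLen μ c + 1) * t ^ legLen μ c)) := by
          refine Finset.prod_congr rfl fun c _ => ?_
          rw [inv_pow, inv_pow]
          field_simp
          ring
      _ = (-1) ^ n * h'QT μ q t := by
          rw [h'QT]
          have h : ∏ c ∈ μ.cells, (-(1 - q ^ (armLen μ c + 1) * t ^ legLen μ c))
              = ∏ c ∈ μ.cells, ((-1) * (1 - q ^ (armLen μ c + 1) * t ^ legLen μ c)) :=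
            Finset.prod_congr rfl fun c _ => (neg_one_mul _).symm
          rw [h, Finset.prod_mul_distrib, Finset.prod_const, hn]
  -- chi transformation
  have claim_chi : chiQT μ q⁻¹ t⁻¹ * (q ^ S2 * t ^ S1) = (-1) ^ (n - 1) * chiQT μ q t := by
    have h1 : (q : ℝ) ^ S2 = ∏ c ∈ (μ.cells.erase (0, 0)), q ^ c.2 := by
      rw [Finset.prod_pow_eq_pow_sum]
      congr 1
      exact (Finset.sum_erase (f := fun c : ℕ × ℕ => c.2) μ.cells rfl).symm
    have h2 : (t : ℝ) ^ S1 = ∏ c ∈ (μ.cells.erase (0, 0)), t ^ c.1 := by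
      rw [Finset.prod_pow_eq_pow_sum]
      congr 1
      exact (Finset.sum_erase (f := fun c : ℕ × ℕ => c.1) μ.cells rfl).symm
    calc chiQT μ q⁻¹ t⁻¹ * (q ^ S2 * t ^ S1)
        = ∏ c ∈ (μ.cells.erase (0, 0)), (((t⁻¹) ^ c.1 - (q⁻¹) ^ c.2) * (q ^ c.2 * t ^ c.1)) := by
          rw [chiQT, h1, h2, ← Finset.prod_mul_distrib, ← Finset.prod_mul_distrib]
      _ = ∏ c ∈ (μ.cells.erase (0, 0)), (-(t ^ c.1 - q ^ c.2)) := by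
          refine Finset.prod_congr rfl fun c _ => ?_
          have h1 : (t : ℝ) ^ c.1 ≠ 0 := pow_ne_zero _ ht
          have h2 : (q : ℝ) ^ c.2 ≠ 0 := pow_ne_zero _ hq
          rw [inv_pow, inv_pow]
          calc ((t ^ c.1)⁻¹ - (q ^ c.2)⁻¹) * (q ^ c.2 * t ^ c.1)
              = (t ^ c.1)⁻¹ * t ^ c.1 * q ^ c.2 - (q ^ c.2)⁻¹ * q ^ c.2 * t ^ c.1 := by ring
            _ = -(t ^ c.1 - q ^ c.2) := by rw [inv_mul_cancel₀ h1, inv_mul_cancel₀ h2]; ring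
      _ = (-1) ^ (n - 1) * chiQT μ q t := by
          rw [chiQT]
          have h : ∏ c ∈ (μ.cells.erase (0, 0)), (-(t ^ c.1 - q ^ c.2))
              = ∏ c ∈ (μ.cells.erase (0, 0)), ((-1) * (t ^ c.1 - q ^ c.2)) :=
            Finset.prod_congr rfl fun c _ => (neg_one_mul _).symm
          rw [h, Finset.prod_mul_distrib, Finset.prod_const, Finset.card_erase_of_mem h00, hn]
  -- the (1 - q^n) factor
  have claim_one : (1 - (q⁻¹ : ℝ) ^ n) * q ^ n = -(1 - q ^ n) := by
    have hqn : (q : ℝ) ^ n ≠ 0 := pow_ne_zero _ hq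
    field_simp
    rw [one_div, inv_pow, sub_mul, inv_mul_cancel₀ hqn]; ring
  have hpow : ((-1 : ℝ)) ^ n = (-1) ^ (n - 1) * (-1) := by
    rw [← pow_succ]
    congr 1
    omega
  have hneg : ((-1 : ℝ)) ^ n ≠ 0 := pow_ne_zero _ (by norm_num)
  have key : uQT μ q⁻¹ t⁻¹ =
      ((1 - q⁻¹ ^ n) * chiQT μ q⁻¹ t⁻¹ * (q ^ (S2 + n) * t ^ S1)) /
        (h'QT μ q⁻¹ t⁻¹ * (q ^ (S2 + n) * t ^ S1)) := by
    rw [mul_div_mul_right _ _ hM, uQT]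
  have num : (1 - q⁻¹ ^ n) * chiQT μ q⁻¹ t⁻¹ * (q ^ (S2 + n) * t ^ S1)
      = (-1) ^ n * ((1 - q ^ n) * chiQT μ q t) := by
    have e1 : (q : ℝ) ^ (S2 + n) * t ^ S1 = q ^ n * (q ^ S2 * t ^ S1) := by
      rw [pow_add]; ring
    rw [e1]
    calc (1 - q⁻¹ ^ n) * chiQT μ q⁻¹ t⁻¹ * (q ^ n * (q ^ S2 * t ^ S1))
        = ((1 - q⁻¹ ^ n) * q ^ n) * (chiQT μ q⁻¹ t⁻¹ * (q ^ S2 * t ^ S1)) := by ring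
      _ = (-(1 - q ^ n)) * ((-1) ^ (n - 1) * chiQT μ q t) := by rw [claim_one, claim_chi]
      _ = (-1) ^ n * ((1 - q ^ n) * chiQT μ q t) := by rw [hpow]; ring
  rw [key, num, claim_h, mul_div_mul_left _ _ hneg, uQT]
end
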